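/- arXiv:1410.1188 — 2 statements merged into one kernel-verified Lean document; each statement's English description precedes it below -/
import Mathlib

section
/- For every n ≥ 1, the Lie algebra homomorphism ψ : 𝔢_{A_{2n+1}} → 𝔢_{A_{2n+2}} determined by sending each generator e_i of 𝔢_{A_{2n+1}} to the generator ẽ_i of 𝔢_{A_{2n+2}} (for i = 1, …, 2n+1) is injective. -/
noncomputable section

open FreeLieAlgebra Matrix

abbrev FL (n : ℕ) : Type := FreeLieAlgebra ℂ (Fin n)

/-- Defining relations of the type `A` electrical Lie algebra (generators are `0`-indexed:
index `i` corresponds to the generator `e_{i+1}`). -/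
def relA (n : ℕ) : Set (FL n) :=
  {x | ∃ i j : Fin n, ((i : ℕ) + 2 ≤ (j : ℕ) ∨ (j : ℕ) + 2 ≤ (i : ℕ)) ∧
        x = ⁅of ℂ i, of ℂ j⁆} ∪
  {x | ∃ i j : Fin n, ((i : ℕ) + 1 = (j : ℕ) ∨ (j : ℕ) + 1 = (i : ℕ)) ∧
        x = ⁅of ℂ i, ⁅of ℂ i, of ℂ j⁆⁆ + (2 : ℂ) • of ℂ i}

/-- The electrical Lie algebra of type `A_n`. -/
abbrev eA (n : ℕ) : Type := FL n ⧸ LieSubmodule.lieSpan ℂ (FL n) (relA n)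

/-- The generator `e_{i+1}` of `eA n`. -/
def gA (n : ℕ) (i : Fin n) : eA n :=
  LieSubmodule.Quotient.mk' (LieSubmodule.lieSpan ℂ (FL n) (relA n)) (of ℂ i)

/-!
The right-normed brackets `c i d = [e_i, [e_{i+1}, …, e_{i+d}]]` with `i + d < m` span `𝔢_{A_m}`:
their span contains the generators and, by a case analysis on the relations, is stable under
`ad e_k`. On the other hand `e_k ↦ E_{k+1,k} + E_{k+1,k+2}` defines a representation of every
`𝔢_{A_m}` on `ℂ^(ℕ)` in which the images of all the `c i d` are linearly independent: the
`(i+1, i+d+2)` entry of a combination is the sum of the coefficients of `c i d` and `c i (d+2)`.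
So this representation is faithful, and as it factors through `e_i ↦ e_i` from `𝔢_{A_m}` to
`𝔢_{A_{m'}}` for `m ≤ m'`, that map is injective.
-/

open Function

section Chain

variable {R L : Type*} [CommRing R] [LieRing L] [LieAlgebra R L]

theorem LieSubalgebra.lieSpan_le_of_lie_mem {s : Set L} {W : Submodule R L} (hs : s ⊆ W)
    (hW : ∀ x ∈ s, ∀ w ∈ W, ⁅x, w⁆ ∈ W) : (lieSpan R L s).toSubmodule ≤ W := by
  suffices ∀ x ∈ lieSpan R L s, x ∈ W ∧ ∀ w ∈ W, ⁅x, w⁆ ∈ W from fun x hx ↦ (this x hx).1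
  intro x hx
  induction hx using lieSpan_induction with
  | mem x hx => exact ⟨hs hx, hW x hx⟩
  | zero => exact ⟨W.zero_mem, fun w _ ↦ by rw [zero_lie]; exact W.zero_mem⟩
  | add x y _ _ hx hy =>
    exact ⟨W.add_mem hx.1 hy.1, fun w hw ↦ by
      rw [add_lie]; exact W.add_mem (hx.2 w hw) (hy.2 w hw)⟩
  | smul t x _ hx =>
    exact ⟨W.smul_mem t hx.1, fun w hw ↦ by rw [smul_lie]; exact W.smul_mem t (hx.2 w hw)⟩
  | lie x y _ _ hx hy =>
    refine ⟨hx.2 y hy.1, fun w hw ↦ ?_⟩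
    rw [lie_lie]
    exact W.sub_mem (hx.2 _ (hy.2 w hw)) (hy.2 _ (hx.2 w hw))

variable (R) in
structure IsElectricalA (m : ℕ) (e : ℕ → L) : Prop where
  lie_eq_zero : ∀ k l, k + 2 ≤ l → l < m → ⁅e k, e l⁆ = 0
  lie_lie_succ : ∀ k, k + 1 < m → ⁅e k, ⁅e k, e (k + 1)⁆⁆ = -(2 : R) • e k
  lie_lie_pred : ∀ k, k + 1 < m → ⁅e (k + 1), ⁅e (k + 1), e k⁆⁆ = -(2 : R) • e (k + 1)

def chain (e : ℕ → L) : ℕ → ℕ → L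
  | i, 0 => e i
  | i, d + 1 => ⁅e i, chain e (i + 1) d⁆

lemma LieHom.map_chain {L' : Type*} [LieRing L'] [LieAlgebra R L'] (f : L →ₗ⁅R⁆ L')
    {e : ℕ → L} {e' : ℕ → L'} {i d : ℕ} (h : ∀ k, i ≤ k → k ≤ i + d → f (e k) = e' k) :
    f (chain e i d) = chain e' i d := by
  induction d generalizing i with
  | zero => exact h i le_rfl le_rfl
  | succ d ih =>
    rw [chain, chain, map_lie, h i le_rfl (by omega), ih fun k hk hk' ↦ h k (by omega) (by omega)]

variable (R) in
def chainSpan (e : ℕ → L) (m a : ℕ) : Submodule R L :=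
  Submodule.span R (uncurry (chain e) '' {p | a ≤ p.1 ∧ p.1 + p.2 < m})

variable {m : ℕ} {e : ℕ → L}

lemma chain_mem_chainSpan {a i d : ℕ} (ha : a ≤ i) (hm : i + d < m) :
    chain e i d ∈ chainSpan R e m a :=
  Submodule.subset_span ⟨(i, d), ⟨ha, hm⟩, rfl⟩

lemma chainSpan_antitone : Antitone (chainSpan R e m) := fun _ _ hab ↦
  Submodule.span_mono <| Set.image_mono fun _ hp ↦ ⟨hab.trans hp.1, hp.2⟩

namespace IsElectricalA

lemma mono {m' : ℕ} (he : IsElectricalA R m' e) (h : m ≤ m') : IsElectricalA R m e where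
  lie_eq_zero k l hkl hl := he.lie_eq_zero k l hkl (by omega)
  lie_lie_succ k hk := he.lie_lie_succ k (by omega)
  lie_lie_pred k hk := he.lie_lie_pred k (by omega)

lemma lie_chain_of_add_two_le (he : IsElectricalA R m e) {k i : ℕ} (d : ℕ) (hki : k + 2 ≤ i)
    (hm : i + d < m) : ⁅e k, chain e i d⁆ = 0 := by
  induction d generalizing i with
  | zero => exact he.lie_eq_zero k i hki hm
  | succ d ih =>
    rw [chain, leibniz_lie, he.lie_eq_zero k i hki (by omega), zero_lie, zero_add,
      ih (by omega) (by omega), lie_zero]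

lemma lie_chain_add_two (he : IsElectricalA R m e) {i d : ℕ} (hm : i + d + 2 < m) :
    ⁅e i, chain e i (d + 2)⁆ = 0 := by
  have hfar : ⁅e i, chain e (i + 1 + 1) d⁆ = 0 := he.lie_chain_of_add_two_le d le_rfl (by omega)
  rw [chain, chain, leibniz_lie (e i) (e (i + 1)), hfar, lie_zero, add_zero, leibniz_lie, hfar,
    lie_zero, add_zero, he.lie_lie_succ i (by omega), smul_lie, hfar, smul_zero]

lemma succ_lie_chain_one (he : IsElectricalA R m e) {i : ℕ} (hm : i + 1 < m) :
    ⁅e (i + 1), chain e i 1⁆ = (2 : R) • e (i + 1) := by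
  rw [chain, chain, ← lie_skew (e i) (e (i + 1)), lie_neg, he.lie_lie_pred i hm, neg_smul,
    neg_neg]

lemma two_smul_succ_lie_chain (he : IsElectricalA R m e) {i d : ℕ} (hm : i + d + 2 < m) :
    (2 : R) • ⁅e (i + 1), chain e i (d + 2)⁆
      = (2 : R) • chain e (i + 1) (d + 1) + ⁅e i, ⁅e (i + 1), chain e (i + 1) (d + 1)⁆⁆ := by
  set w := ⁅e (i + 1), e i⁆
  set y := chain e (i + 2) d
  have hw : ⁅w, e (i + 1)⁆ = (2 : R) • e (i + 1) := by
    rw [← lie_skew, he.lie_lie_pred i (by omega), neg_smul, neg_neg]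
  have hwy : ⁅w, y⁆ = -chain e i (d + 2) := by
    rw [lie_lie, he.lie_chain_of_add_two_le d le_rfl (by omega), lie_zero, zero_sub]; rfl
  -- Expanding by Jacobi, the left-hand side reappears on the right with the opposite sign.
  have hX : ⁅e (i + 1), chain e i (d + 2)⁆
      = (2 : R) • chain e (i + 1) (d + 1) - ⁅e (i + 1), chain e i (d + 2)⁆
        + ⁅e i, ⁅e (i + 1), chain e (i + 1) (d + 1)⁆⁆ := by
    calc ⁅e (i + 1), chain e i (d + 2)⁆
        = ⁅w, ⁅e (i + 1), y⁆⁆ + ⁅e i, ⁅e (i + 1), chain e (i + 1) (d + 1)⁆⁆ := leibniz_lie _ _ _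
      _ = _ := by rw [leibniz_lie w, hw, hwy, smul_lie, lie_neg, ← sub_eq_add_neg]; rfl
  linear_combination (norm := module) hX

lemma lie_mem_chainSpan_of_mem_succ (he : IsElectricalA R m e) {a : ℕ} {x : L}
    (hx : x ∈ chainSpan R e m (a + 1)) : ⁅e a, x⁆ ∈ chainSpan R e m a := by
  induction hx using Submodule.span_induction with
  | mem x hx =>
    obtain ⟨⟨i, d⟩, ⟨hi, hm⟩, rfl⟩ := hx
    rcases (show i = a + 1 ∨ a + 2 ≤ i by omega) with rfl | hi
    · exact chain_mem_chainSpan (d := d + 1) le_rfl (by omega)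
    · rw [uncurry_apply_pair, he.lie_chain_of_add_two_le d hi hm]
      exact zero_mem _
  | zero => rw [lie_zero]; exact zero_mem _
  | add x y _ _ hx hy => rw [lie_add]; exact add_mem hx hy
  | smul t x _ hx => rw [lie_smul]; exact Submodule.smul_mem _ t hx

-- Keeping the start index `a` in the conclusion is what makes the induction on `d` go through.
lemma lie_chain_mem_chainSpan (he : IsElectricalA R m e) (h2 : IsUnit (2 : R)) {a k d : ℕ}
    (hak : a ≤ k) (hk : k < m) (hm : a + d < m) : ⁅e k, chain e a d⁆ ∈ chainSpan R e m a := by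
  induction d generalizing a k with
  | zero =>
    rcases (show k = a ∨ k = a + 1 ∨ a + 2 ≤ k by omega) with rfl | rfl | hak
    · rw [chain, lie_self]; exact zero_mem _
    · rw [chain, ← lie_skew]; exact neg_mem (chain_mem_chainSpan (d := 1) le_rfl hk)
    · rw [chain, ← lie_skew, he.lie_eq_zero a k hak hk, neg_zero]; exact zero_mem _
  | succ d ih =>
    rcases (show k = a ∨ k = a + 1 ∨ a + 2 ≤ k by omega) with rfl | rfl | hak
    · cases d with
      | zero =>
        rw [chain, chain, he.lie_lie_succ _ hm]
        exact Submodule.smul_mem _ _ (chain_mem_chainSpan (d := 0) le_rfl (by omega))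
      | succ d => rw [he.lie_chain_add_two hm]; exact zero_mem _
    · cases d with
      | zero =>
        rw [he.succ_lie_chain_one hm]
        exact chainSpan_antitone a.le_succ
          (Submodule.smul_mem _ _ (chain_mem_chainSpan (d := 0) le_rfl hk))
      | succ d =>
        rw [← Submodule.smul_mem_iff_of_isUnit _ h2, he.two_smul_succ_lie_chain (by omega)]
        exact add_mem
          (chainSpan_antitone a.le_succ
            (Submodule.smul_mem _ _ (chain_mem_chainSpan le_rfl (by omega))))
          (he.lie_mem_chainSpan_of_mem_succ (ih le_rfl hk (by omega)))
    · rw [chain, leibniz_lie, ← lie_skew (e k) (e a), he.lie_eq_zero a k hak hk, neg_zero,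
        zero_lie, zero_add]
      exact he.lie_mem_chainSpan_of_mem_succ (ih (by omega) hk (by omega))

lemma lie_mem_chainSpan (he : IsElectricalA R m e) (h2 : IsUnit (2 : R)) {k : ℕ} (hk : k < m)
    {x : L} (hx : x ∈ chainSpan R e m 0) : ⁅e k, x⁆ ∈ chainSpan R e m 0 := by
  induction hx using Submodule.span_induction with
  | mem x hx =>
    obtain ⟨⟨i, d⟩, ⟨-, hm⟩, rfl⟩ := hx
    rcases (show i ≤ k ∨ k + 1 = i ∨ k + 2 ≤ i by omega) with hik | rfl | hki
    · exact chainSpan_antitone i.zero_le (he.lie_chain_mem_chainSpan h2 hik hk hm)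
    · exact chain_mem_chainSpan (d := d + 1) (Nat.zero_le _) (by omega)
    · rw [uncurry_apply_pair, he.lie_chain_of_add_two_le d hki hm]
      exact zero_mem _
  | zero => rw [lie_zero]; exact zero_mem _
  | add x y _ _ hx hy => rw [lie_add]; exact add_mem hx hy
  | smul t x _ hx => rw [lie_smul]; exact Submodule.smul_mem _ t hx

lemma lieSpan_le_chainSpan (he : IsElectricalA R m e) (h2 : IsUnit (2 : R)) :
    (LieSubalgebra.lieSpan R L (e '' Set.Iio m)).toSubmodule ≤ chainSpan R e m 0 := by
  refine LieSubalgebra.lieSpan_le_of_lie_mem ?_ ?_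
  · rintro _ ⟨k, hk, rfl⟩
    exact chain_mem_chainSpan (d := 0) (Nat.zero_le k) (by simpa using hk)
  · rintro _ ⟨k, hk, rfl⟩ w hw
    exact he.lie_mem_chainSpan h2 hk hw

end IsElectricalA
end Chain

theorem LinearMap.injective_of_linearIndepOn_comp {R M N ι : Type*} [Ring R] [AddCommGroup M]
    [Module R M] [AddCommGroup N] [Module R N] (f : M →ₗ[R] N) {v : ι → M} {s : Set ι}
    (hv : LinearIndepOn R (f ∘ v) s) (hs : Submodule.span R (v '' s) = ⊤) : Injective f := by
  refine (injective_iff_map_eq_zero f).2 fun x hx ↦ ?_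
  obtain ⟨l, hl, rfl⟩ :=
    (Finsupp.mem_span_image_iff_linearCombination R).1 (hs ▸ Submodule.mem_top : x ∈ _)
  rw [Finsupp.apply_linearCombination] at hx
  rw [linearIndepOn_iff.1 hv l hl hx, map_zero]

namespace eA

variable {m : ℕ} {L : Type*} [LieRing L] [LieAlgebra ℂ L]

def mk (m : ℕ) : FL m →ₗ⁅ℂ⁆ eA m :=
  { (LieSubmodule.lieSpan ℂ (FL m) (relA m)).toSubmodule.mkQ with map_lie' := rfl }

lemma mk_surjective : Surjective (mk m) := Submodule.Quotient.mk_surjective _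

lemma mk_of (i : Fin m) : mk m (of ℂ i) = gA m i := rfl

lemma mk_eq_zero_of_mem_relA {x : FL m} (hx : x ∈ relA m) : mk m x = 0 :=
  (Submodule.Quotient.mk_eq_zero _).2 (LieSubmodule.subset_lieSpan hx)

lemma hom_ext {f g : eA m →ₗ⁅ℂ⁆ L} (h : ∀ i, f (gA m i) = g (gA m i)) : f = g := by
  have hmk : f.comp (mk m) = g.comp (mk m) := FreeLieAlgebra.hom_ext h
  ext x
  obtain ⟨y, rfl⟩ := mk_surjective x
  exact LieHom.congr_fun hmk y

lemma lieSpan_relA_le_ker {e : ℕ → L} (he : IsElectricalA ℂ m e) :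
    LieSubmodule.lieSpan ℂ (FL m) (relA m) ≤ (FreeLieAlgebra.lift ℂ fun i : Fin m ↦ e i).ker := by
  rw [LieSubmodule.lieSpan_le]
  rintro x (⟨i, j, hij | hji, rfl⟩ | ⟨i, j, hij | hji, rfl⟩) <;>
    simp only [SetLike.mem_coe, LieHom.mem_ker, LieHom.map_lie, map_add, map_smul, lift_of_apply]
  · exact he.lie_eq_zero i j hij j.isLt
  · rw [← lie_skew, he.lie_eq_zero j i hji i.isLt, neg_zero]
  · rw [← hij, he.lie_lie_succ i (by omega), neg_smul, neg_add_cancel]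
  · rw [← hji, he.lie_lie_pred j (by omega), neg_smul, neg_add_cancel]

def lift (e : ℕ → L) (he : IsElectricalA ℂ m e) : eA m →ₗ⁅ℂ⁆ L :=
  { (LieSubmodule.lieSpan ℂ (FL m) (relA m)).toSubmodule.liftQ
      (FreeLieAlgebra.lift ℂ fun i : Fin m ↦ e i).toLinearMap
      fun _ hx ↦ LieHom.mem_ker.1 (lieSpan_relA_le_ker he hx) with
    map_lie' := by
      rintro ⟨x⟩ ⟨y⟩
      exact (FreeLieAlgebra.lift ℂ fun i : Fin m ↦ e i).map_lie x y }

lemma lift_gA (e : ℕ → L) (he : IsElectricalA ℂ m e) (i : Fin m) :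
    lift e he (gA m i) = e i :=
  lift_of_apply (R := ℂ) _ i

def gen (m k : ℕ) : eA m := if h : k < m then gA m ⟨k, h⟩ else 0

lemma gen_val (i : Fin m) : gen m i = gA m i := dif_pos i.isLt

lemma gA_lie_lie {i j : Fin m} (h : (i : ℕ) + 1 = j ∨ (j : ℕ) + 1 = i) :
    ⁅gA m i, ⁅gA m i, gA m j⁆⁆ = -(2 : ℂ) • gA m i := by
  have hrel := mk_eq_zero_of_mem_relA (Or.inr ⟨i, j, h, rfl⟩)
  rw [map_add, LieHom.map_lie, LieHom.map_lie, map_smul, mk_of, mk_of] at hrel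
  rw [neg_smul]
  exact eq_neg_of_add_eq_zero_left hrel

lemma isElectricalA_gen : IsElectricalA ℂ m (gen m) where
  lie_eq_zero k l hkl hl := by
    rw [gen, gen, dif_pos (by omega), dif_pos hl, ← mk_of, ← mk_of, ← LieHom.map_lie]
    exact mk_eq_zero_of_mem_relA (Or.inl ⟨_, _, Or.inl hkl, rfl⟩)
  lie_lie_succ k hk := by
    simp only [gen, dif_pos hk, dif_pos (show k < m by omega)]
    exact gA_lie_lie (Or.inl rfl)
  lie_lie_pred k hk := by
    simp only [gen, dif_pos hk, dif_pos (show k < m by omega)]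
    exact gA_lie_lie (Or.inr rfl)

lemma lieSpan_gen_eq_top : LieSubalgebra.lieSpan ℂ (eA m) (gen m '' Set.Iio m) = ⊤ := by
  set K := LieSubalgebra.lieSpan ℂ (eA m) (gen m '' Set.Iio m)
  let F : FL m →ₗ⁅ℂ⁆ K := FreeLieAlgebra.lift ℂ fun i ↦
    ⟨gA m i, LieSubalgebra.subset_lieSpan ⟨i, i.isLt, gen_val i⟩⟩
  have hF : K.incl.comp F = mk m := FreeLieAlgebra.hom_ext fun i ↦ by simp [F, mk_of]
  refine eq_top_iff.2 fun x _ ↦ ?_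
  obtain ⟨y, rfl⟩ := mk_surjective x
  rw [← hF]
  exact (F y).2

lemma chainSpan_gen_eq_top : chainSpan ℂ (gen m) m 0 = ⊤ := by
  have := (isElectricalA_gen (m := m)).lieSpan_le_chainSpan (two_ne_zero' ℂ).isUnit
  rwa [lieSpan_gen_eq_top, LieSubalgebra.top_toSubmodule, top_le_iff] at this

end eA

section Representation

-- Low priority, so that the rings `R` themselves keep their usual additive structure.
attribute [local instance 100] LieRing.ofAssociativeRing

variable (R : Type*) [CommRing R] {ι : Type*} [DecidableEq ι]

def singleEnd (a b : ι) : Module.End R (ι →₀ R) :=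
  Finsupp.lsingle a ∘ₗ Finsupp.lapply b

def endCoeff (r s : ι) : Module.End R (ι →₀ R) →ₗ[R] R :=
  Finsupp.lapply r ∘ₗ LinearMap.applyₗ (Finsupp.single s 1)

variable {R}

lemma singleEnd_mul (a b c d : ι) :
    singleEnd R a b * singleEnd R c d = if b = c then singleEnd R a d else 0 := by
  ext x y
  split_ifs with h
  · subst h; simp [singleEnd]
  · simp [singleEnd, Finsupp.single_apply, h]

lemma endCoeff_singleEnd (r s a b : ι) :
    endCoeff R r s (singleEnd R a b) = if a = r ∧ b = s then 1 else 0 := by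
  simp [endCoeff, singleEnd, Finsupp.single_apply, ite_and, eq_comm]

lemma lie_lie_eq_neg_two_smul_of_mul_self_eq_zero {A : Type*} [Ring A] [Algebra R A] {a b : A}
    (ha : a * a = 0) (haba : a * b * a = a) : ⁅a, ⁅a, b⁆⁆ = -(2 : R) • a := by
  calc ⁅a, ⁅a, b⁆⁆ = a * a * b + b * (a * a) - (a * b * a + a * b * a) := by
        simp only [Ring.lie_def]; noncomm_ring
    _ = -(2 : R) • a := by
        rw [ha, haba, zero_mul, mul_zero, zero_add, zero_sub, neg_smul, two_smul]

variable (R) in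
def repA (k : ℕ) : Module.End R (ℕ →₀ R) := singleEnd R (k + 1) k + singleEnd R (k + 1) (k + 2)

lemma repA_mul_self (k : ℕ) : repA R k * repA R k = 0 := by
  simp [repA, add_mul, mul_add, singleEnd_mul]

lemma repA_mul_succ_mul (k : ℕ) : repA R k * repA R (k + 1) * repA R k = repA R k := by
  simp (disch := omega) only [repA, add_mul, mul_add, singleEnd_mul, if_neg, if_true, add_zero,
    zero_add]

lemma repA_succ_mul_mul (k : ℕ) :
    repA R (k + 1) * repA R k * repA R (k + 1) = repA R (k + 1) := by
  simp (disch := omega) only [repA, add_mul, mul_add, singleEnd_mul, if_neg, if_true, add_zero,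
    zero_add]

lemma isElectricalA_repA (m : ℕ) : IsElectricalA R m (repA R) where
  lie_eq_zero k l hkl _ := by
    rw [LieRing.of_associative_ring_bracket]
    simp (disch := omega) only [repA, add_mul, mul_add, singleEnd_mul, if_neg, add_zero, sub_self]
  lie_lie_succ k _ :=
    lie_lie_eq_neg_two_smul_of_mul_self_eq_zero (repA_mul_self k) (repA_mul_succ_mul k)
  lie_lie_pred k _ :=
    lie_lie_eq_neg_two_smul_of_mul_self_eq_zero (repA_mul_self _) (repA_succ_mul_mul k)

lemma chain_repA_succ (i d : ℕ) :
    chain (repA R) i (d + 1) = singleEnd R (i + 1) (i + d + 1) + singleEnd R (i + 1) (i + d + 3)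
      + (-1 : R) ^ (d + 1) • (singleEnd R (i + d + 2) i + singleEnd R (i + d + 2) (i + 2)) := by
  induction d generalizing i with
  | zero =>
    rw [chain, chain, LieRing.of_associative_ring_bracket]
    simp (disch := omega) only [repA, add_mul, mul_add, singleEnd_mul, if_neg, if_true, add_zero,
      zero_add, add_assoc, Nat.reduceAdd]
    module
  | succ d ih =>
    rw [chain, ih, LieRing.of_associative_ring_bracket]
    simp +arith (disch := omega) only [repA, add_mul, mul_add, singleEnd_mul, if_true, if_false,
      add_zero, zero_add, mul_smul_comm, smul_mul_assoc, smul_zero]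
    rw [pow_succ (-1 : R) (d + 1)]
    module

lemma endCoeff_chain_repA (i d k d' : ℕ) :
    endCoeff R (i + 1) (i + d + 2) (chain (repA R) k d')
      = (if (k, d') = (i, d) then 1 else 0) + (if (k, d') = (i, d + 2) then 1 else 0) := by
  cases d' with
  | zero =>
    simp only [chain, repA, map_add, endCoeff_singleEnd, Prod.mk.injEq]
    split_ifs <;> first | (exfalso; omega) | simp_all
  | succ d' =>
    simp only [chain_repA_succ, map_add, map_smul, endCoeff_singleEnd, Prod.mk.injEq, smul_eq_mul]
    split_ifs <;> first | (exfalso; omega) | simp_all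

lemma linearIndependent_chain_repA : LinearIndependent R (uncurry (chain (repA R))) := by
  refine (injective_iff_map_eq_zero (Finsupp.linearCombination R _)).2 fun l hl ↦ ?_
  have hstep : ∀ i d, l (i, d) + l (i, d + 2) = 0 := by
    intro i d
    have h := congrArg (endCoeff R (i + 1) (i + d + 2)) hl
    rw [map_zero, Finsupp.apply_linearCombination, Finsupp.linearCombination_apply] at h
    simpa [Finsupp.sum, uncurry_def, endCoeff_chain_repA, mul_add, Finset.sum_add_distrib] using h
  obtain ⟨N, hN⟩ : ∃ N, ∀ p ∈ l.support, p.2 < N :=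
    ⟨l.support.sup Prod.snd + 1, fun p hp ↦ Nat.lt_succ_of_le (Finset.le_sup hp)⟩
  have hvanish : ∀ t i d, N ≤ d + 2 * t → l (i, d) = 0 := by
    intro t
    induction t with
    | zero =>
      intro i d hd
      by_contra hne
      have := hN _ (Finsupp.mem_support_iff.2 hne)
      omega
    | succ t ih =>
      intro i d hd
      simpa [ih i (d + 2) (by omega)] using hstep i d
  exact Finsupp.ext fun p ↦ hvanish N p.1 p.2 (by omega)

namespace eA

variable {m m' : ℕ}

def rep (m : ℕ) : eA m →ₗ⁅ℂ⁆ Module.End ℂ (ℕ →₀ ℂ) := lift (repA ℂ) (isElectricalA_repA m)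

lemma rep_gen {k : ℕ} (hk : k < m) : rep m (gen m k) = repA ℂ k := by
  rw [gen, dif_pos hk, rep, lift_gA]

theorem rep_injective : Injective (rep m) := by
  refine (rep m).toLinearMap.injective_of_linearIndepOn_comp ?_ chainSpan_gen_eq_top
  refine (linearIndependent_chain_repA.linearIndepOn _).congr fun p hp ↦ ?_
  exact ((rep m).map_chain fun k _ hk ↦ rep_gen (by have := hp.2; omega)).symm

def embed (h : m ≤ m') : eA m →ₗ⁅ℂ⁆ eA m' := lift (gen m') (isElectricalA_gen.mono h)

lemma embed_gA (h : m ≤ m') (i : Fin m) : embed h (gA m i) = gA m' (Fin.castLE h i) := by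
  rw [embed, lift_gA, ← gen_val]
  rfl

lemma rep_comp_embed (h : m ≤ m') : (rep m').comp (embed h) = rep m :=
  hom_ext fun i ↦ by
    rw [LieHom.comp_apply, embed, lift_gA, rep_gen (by omega), ← gen_val, rep_gen i.isLt]

theorem embed_injective (h : m ≤ m') : Injective (embed h) := by
  have := rep_injective (m := m)
  rw [← rep_comp_embed h, LieHom.coe_comp] at this
  exact this.of_comp

end eA

end Representation

theorem stmt1_general (n : ℕ) :
    ∃ ψ : eA (2 * n + 1) →ₗ⁅ℂ⁆ eA (2 * n + 2),
      (∀ i : Fin (2 * n + 1), ψ (gA (2 * n + 1) i) = gA (2 * n + 2) i.castSucc) ∧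
      Function.Injective ψ :=
  ⟨eA.embed (Nat.le_succ _), eA.embed_gA _, eA.embed_injective _⟩

theorem stmt1 (n : ℕ) (hn : 1 ≤ n) :
    ∃ ψ : eA (2 * n + 1) →ₗ⁅ℂ⁆ eA (2 * n + 2),
      (∀ i : Fin (2 * n + 1), ψ (gA (2 * n + 1) i) = gA (2 * n + 2) i.castSucc) ∧
      Function.Injective ψ :=
  stmt1_general n
end
end

section
/- For every n ≥ 0, the set of matrices in the symplectic Lie algebra sp_{2n+2}(ℂ) whose (n+1)-st column is zero is closed under the matrix Lie bracket, hence forms a Lie subalgebra of sp_{2n+2}(ℂ), and this Lie subalgebra has complex dimension (n+1)(2n+1). -/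
/-!
Multiplication on the left by `J` turns the condition `Aᵀ J + J A = 0` into the symmetry of
`J A`, and since `J` is invertible it preserves the vanishing of a given column. So the space in
question is isomorphic to the space of symmetric `N × N` matrices with a prescribed zero column,
`N = 2n + 2`. Symmetric matrices are functions on `Sym2`, of dimension `N(N+1)/2`, and taking a
column maps them onto `ℂᴺ`, so the kernel has dimension `N(N-1)/2 = (n+1)(2n+1)`. Closure under
the bracket holds because `(A B) e_j = A (B e_j)` vanishes whenever `B e_j` does.
-/

noncomputable section

open FreeLieAlgebra Matrix

attribute [local instance 100] LieRing.ofAssociativeRing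

/-- The matrix `J = [[0, I_m], [-I_m, 0]]`. -/
def Jmat (m : ℕ) : Matrix (Fin m ⊕ Fin m) (Fin m ⊕ Fin m) ℂ :=
  Matrix.fromBlocks 0 1 (-1) 0

/-- The symplectic Lie algebra `sp_{2m}(ℂ)` of matrices `M` with `Mᵀ J + J M = 0`. -/
def sp (m : ℕ) : LieSubalgebra ℂ (Matrix (Fin m ⊕ Fin m) (Fin m ⊕ Fin m) ℂ) :=
  skewAdjointMatricesLieSubalgebra (Jmat m)

namespace Matrix

section CommRing

variable (R : Type*) {ι : Type*} [CommRing R]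

def symmetricSubmodule (ι : Type*) : Submodule R (Matrix ι ι R) where
  carrier := {B | B.IsSymm}
  add_mem' := IsSymm.add
  zero_mem' := isSymm_zero
  smul_mem' c _ hB := hB.smul c

def symmetricSubmoduleEquivSym2 : symmetricSubmodule R ι ≃ₗ[R] (Sym2 ι → R) where
  toFun B := Sym2.lift ⟨B.1, fun i k => (B.2.apply i k).symm⟩
  invFun f := ⟨of fun i k => f s(i, k), IsSymm.ext fun i k => by simp [Sym2.eq_swap]⟩
  left_inv _ := rfl
  right_inv f := funext (Sym2.ind fun _ _ => rfl)
  map_add' _ _ := funext (Sym2.ind fun _ _ => rfl)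
  map_smul' _ _ := funext (Sym2.ind fun _ _ => rfl)

theorem finrank_symmetricSubmodule [Nontrivial R] [Fintype ι] :
    Module.finrank R (symmetricSubmodule R ι) = (Fintype.card ι + 1).choose 2 := by
  rw [(symmetricSubmoduleEquivSym2 R).finrank_eq, Module.finrank_fintype_fun_eq_card, Sym2.card]

variable {R} in
theorem isSkewAdjoint_iff_isSymm_mul [Fintype ι] {J A : Matrix ι ι R} (hJ : Jᵀ = -J) :
    J.IsSkewAdjoint A ↔ (J * A).IsSymm := by
  rw [Matrix.IsSkewAdjoint, Matrix.IsAdjointPair, IsSymm, transpose_mul, hJ, mul_neg, mul_neg,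
    neg_eq_iff_eq_neg, eq_comm]

variable [Fintype ι] [DecidableEq ι]

def columnZeroLieSubalgebra (j : ι) : LieSubalgebra R (Matrix ι ι R) where
  carrier := {A | ∀ i, A i j = 0}
  add_mem' hA hB i := by simp [hA i, hB i]
  zero_mem' _ := rfl
  smul_mem' c A hA i := by simp [hA i]
  lie_mem' {A B} (hA : ∀ i, A i j = 0) (hB : ∀ i, B i j = 0) i := by
    simp [Ring.lie_def, mul_apply, hA, hB]

variable {R}

theorem mem_columnZeroLieSubalgebra_iff_mulVec {A : Matrix ι ι R} {j : ι} :
    A ∈ columnZeroLieSubalgebra R j ↔ A *ᵥ Pi.single j 1 = 0 := by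
  rw [mulVec_single_one, funext_iff]
  rfl

theorem mul_mem_columnZeroLieSubalgebra_iff {J A : Matrix ι ι R} (hJ : IsUnit J) {j : ι} :
    J * A ∈ columnZeroLieSubalgebra R j ↔ A ∈ columnZeroLieSubalgebra R j := by
  simp only [mem_columnZeroLieSubalgebra_iff_mulVec, ← mulVec_mulVec]
  exact (mulVec_injective_of_isUnit hJ).eq_iff' (mulVec_zero J)

theorem finrank_skewAdjoint_inf_columnZero {J : Matrix ι ι R} (hJ : IsUnit J) (hJt : Jᵀ = -J)
    (j : ι) :
    Module.finrank R ↥(skewAdjointMatricesLieSubalgebra J ⊓ columnZeroLieSubalgebra R j) =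
      Module.finrank R
        ↥(symmetricSubmodule R ι ⊓ (columnZeroLieSubalgebra R j).toSubmodule) := by
  let e := hJ.unit.mulLeftLinearEquiv R (Matrix ι ι R)
  have hcomap :
      (symmetricSubmodule R ι ⊓ (columnZeroLieSubalgebra R j).toSubmodule).comap e.toLinearMap =
        (skewAdjointMatricesLieSubalgebra J ⊓ columnZeroLieSubalgebra R j).toSubmodule := by
    ext A
    simp [e, mem_skewAdjointMatricesSubmodule, isSkewAdjoint_iff_isSymm_mul hJt,
      mul_mem_columnZeroLieSubalgebra_iff hJ, symmetricSubmodule]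
  rw [← (e.ofSubmodule' _).finrank_eq, hcomap]
  rfl

end CommRing

theorem finrank_symmetricSubmodule_inf_columnZero {K ι : Type*} [Field K] [Fintype ι]
    [DecidableEq ι] (j : ι) :
    Module.finrank K ↥(symmetricSubmodule K ι ⊓ (columnZeroLieSubalgebra K j).toSubmodule) =
      (Fintype.card ι).choose 2 := by
  let column : symmetricSubmodule K ι →ₗ[K] ι → K :=
    { toFun B i := B.1 i j, map_add' _ _ := rfl, map_smul' _ _ := rfl }
  have hsurj : Function.Surjective column := fun w =>
    ⟨⟨of fun i k => if k = j then w i else if i = j then w k else 0,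
      IsSymm.ext fun i k => by by_cases i = j <;> by_cases k = j <;> simp_all⟩,
      funext fun _ => if_pos rfl⟩
  have hker : LinearMap.ker column = (symmetricSubmodule K ι ⊓
      (columnZeroLieSubalgebra K j).toSubmodule).comap (symmetricSubmodule K ι).subtype := by
    ext B
    exact ⟨fun h => ⟨B.2, congrFun h⟩, fun h => funext h.2⟩
  have hrank := column.finrank_range_add_finrank_ker
  rw [LinearMap.range_eq_top.mpr hsurj, finrank_top, Module.finrank_fintype_fun_eq_card, hker,
    (Submodule.comapSubtypeEquivOfLe inf_le_left).finrank_eq, finrank_symmetricSubmodule,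
    Nat.choose_succ_succ', Nat.choose_one_right] at hrank
  simp only [Nat.reduceAdd] at hrank
  omega

end Matrix

theorem transpose_Jmat (m : ℕ) : (Jmat m)ᵀ = -Jmat m := by
  simp [Jmat, fromBlocks_transpose, fromBlocks_neg]

theorem Jmat_mul_self (m : ℕ) : Jmat m * Jmat m = -1 := by
  simp [Jmat, fromBlocks_multiply, ← fromBlocks_one, fromBlocks_neg]

theorem isUnit_Jmat (m : ℕ) : IsUnit (Jmat m) :=
  IsUnit.of_mul_eq_one (-Jmat m) (by rw [mul_neg, Jmat_mul_self, neg_neg])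

theorem stmt3 (n : ℕ) :
    ∃ S : LieSubalgebra ℂ
        (Matrix (Fin (n + 1) ⊕ Fin (n + 1)) (Fin (n + 1) ⊕ Fin (n + 1)) ℂ),
      (S : Set (Matrix (Fin (n + 1) ⊕ Fin (n + 1)) (Fin (n + 1) ⊕ Fin (n + 1)) ℂ)) =
        {A | A ∈ sp (n + 1) ∧ ∀ i, A i (Sum.inl (Fin.last n)) = 0} ∧
      Module.rank ℂ S = ((n + 1) * (2 * n + 1) : ℕ) := by
  refine ⟨sp (n + 1) ⊓ columnZeroLieSubalgebra ℂ (Sum.inl (Fin.last n)),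
    LieSubalgebra.coe_inf _ _, ?_⟩
  rw [← Module.finrank_eq_rank, sp, finrank_skewAdjoint_inf_columnZero (isUnit_Jmat _)
    (transpose_Jmat _), finrank_symmetricSubmodule_inf_columnZero, Fintype.card_sum,
    Fintype.card_fin, Nat.choose_two_right, show n + 1 + (n + 1) - 1 = 2 * n + 1 by omega]
  exact congrArg _ (Nat.div_eq_of_eq_mul_left two_pos (by ring))
end
end
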